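/- If R is an extended regular expression whose language does not contain the empty word, then for every a ∈ D and every finite word u: a·u is a minimal word of L(R) if and only if u is a minimal word of the language of leaf(δ(R), a), where a word u is minimal in a language L if u lies in L and no proper prefix x ⊊ u (including x = ε when u ≠ ε) lies in L. -/
import Mathlib


open Classical

/-- An effective Boolean algebra over a domain `D` with predicates `P`. -/
structure EBA (D : Type*) (P : Type*) where
  den : P → Set D
  bot : P
  top : P
  band : P → P → P
  bor : P → P → P
  bnot : P → P
  den_bot : den bot = ∅
  den_top : den top = Set.univ
  den_and : ∀ α β, den (band α β) = den α ∩ den β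
  den_or : ∀ α β, den (bor α β) = den α ∪ den β
  den_not : ∀ α, den (bnot α) = (den α)ᶜ

/-- Transition terms over predicates `P` with leaves in `Φ`:
nested if-then-else expressions. -/
inductive TT (P : Type*) (Φ : Type*) where
  | leaf : Φ → TT P Φ
  | ite : P → TT P Φ → TT P Φ → TT P Φ

/-- The leaf of a transition term for an element `a` of the domain. -/
noncomputable def leafOf {D P Φ : Type*} (E : EBA D P) : TT P Φ → D → Φ
  | .leaf φ, _ => φ
  | .ite α f g, a => if a ∈ E.den α then leafOf E f a else leafOf E g a

/-- Lifting of a binary operation on leaves to transition terms. -/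
def liftBin {P Φ Φ' : Type*} (op : Φ → Φ → Φ') : TT P Φ → TT P Φ → TT P Φ'
  | .ite α f g, h => .ite α (liftBin op f h) (liftBin op g h)
  | .leaf φ, .ite α f g => .ite α (liftBin op (.leaf φ) f) (liftBin op (.leaf φ) g)
  | .leaf φ, .leaf ψ => .leaf (op φ ψ)

/-- Lifting of a unary operation on leaves to transition terms. -/
def liftUn {P Φ Φ' : Type*} (op : Φ → Φ') : TT P Φ → TT P Φ'
  | .leaf φ => .leaf (op φ)
  | .ite α f g => .ite α (liftUn op f) (liftUn op g)

/-- Extended regular expressions modulo an algebra of predicates `P`. -/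
inductive ERE (P : Type*) where
  | pred : P → ERE P
  | eps : ERE P
  | union : ERE P → ERE P → ERE P
  | inter : ERE P → ERE P → ERE P
  | concat : ERE P → ERE P → ERE P
  | star : ERE P → ERE P
  | compl : ERE P → ERE P

/-- The finite-word language of an extended regular expression, where
`den` is the denotation function of the predicate algebra. -/
def lang {D P : Type*} (den : P → Set D) : ERE P → Set (List D)
  | .pred α => {u | ∃ a ∈ den α, u = [a]}
  | .eps => {[]}
  | .union r s => lang den r ∪ lang den s
  | .inter r s => lang den r ∩ lang den s
  | .concat r s => {u | ∃ x ∈ lang den r, ∃ y ∈ lang den s, u = x ++ y}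
  | .star r => {u | ∃ L : List (List D), (∀ x ∈ L, x ∈ lang den r) ∧ u = L.flatten}
  | .compl r => (lang den r)ᶜ

/-- Nullability of an extended regular expression. -/
def nullable {P : Type*} : ERE P → Bool
  | .pred _ => false
  | .eps => true
  | .union r s => nullable r || nullable s
  | .inter r s => nullable r && nullable s
  | .concat r s => nullable r && nullable s
  | .star _ => true
  | .compl r => !nullable r

/-- The symbolic derivative of an extended regular expression:
a transition term with regex leaves. -/
noncomputable def derive {D P : Type*} (E : EBA D P) : ERE P → TT P (ERE P)
  | .eps => .leaf (.pred E.bot)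
  | .pred α => .ite α (.leaf .eps) (.leaf (.pred E.bot))
  | .union r s => liftBin ERE.union (derive E r) (derive E s)
  | .inter r s => liftBin ERE.inter (derive E r) (derive E s)
  | .compl r => liftUn ERE.compl (derive E r)
  | .star r => liftUn (fun t => ERE.concat t (.star r)) (derive E r)
  | .concat r s =>
    if nullable r then
      liftBin ERE.union (liftUn (fun t => ERE.concat t s) (derive E r)) (derive E s)
    else liftUn (fun t => ERE.concat t s) (derive E r)

/-- `x ⪯' u`: `x` is a nonempty proper prefix of `u`, or `x = ε` and `u ≠ ε`. -/
def precE {D : Type*} (x u : List D) : Prop :=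
  (x ≠ [] ∧ x <+: u ∧ x ≠ u) ∨ (x = [] ∧ u ≠ [])

/-- The minimal words of a language: members with no prefix (under `⪯'`)
in the language. -/
def MinSet {D : Type*} (L : Set (List D)) : Set (List D) :=
  {u | u ∈ L ∧ ¬ ∃ x, precE x u ∧ x ∈ L}

lemma leafOf_liftBin {D P Φ Φ' : Type*} (E : EBA D P) (op : Φ → Φ → Φ')
    (f g : TT P Φ) (a : D) :
    leafOf E (liftBin op f g) a = op (leafOf E f a) (leafOf E g a) := by
  induction f generalizing g with
  | leaf φ =>
    induction g with
    | leaf ψ => simp [liftBin, leafOf]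
    | ite α f' g' ihf ihg =>
      simp only [liftBin, leafOf]
      split <;> simp [*, leafOf]
  | ite α f' g' ihf ihg =>
    simp only [liftBin, leafOf]
    split <;> simp [*, leafOf]

lemma leafOf_liftUn {D P Φ Φ' : Type*} (E : EBA D P) (op : Φ → Φ')
    (f : TT P Φ) (a : D) :
    leafOf E (liftUn op f) a = op (leafOf E f a) := by
  induction f with
  | leaf φ => rfl
  | ite α f' g' ihf ihg =>
    simp only [liftUn, leafOf]
    split <;> simp [*]

lemma nullable_iff {D P : Type*} (den : P → Set D) (R : ERE P) :
    nullable R = true ↔ [] ∈ lang den R := by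
  induction R with
  | pred α => simp [nullable, lang]
  | eps => simp [nullable, lang]
  | union r s ihr ihs => simp [nullable, lang, ihr, ihs]
  | inter r s ihr ihs => simp [nullable, lang, ihr, ihs]
  | concat r s ihr ihs =>
    simp only [nullable, lang, Bool.and_eq_true, ihr, ihs, Set.mem_setOf_eq]
    constructor
    · rintro ⟨hr, hs⟩; exact ⟨[], hr, [], hs, rfl⟩
    · rintro ⟨x, hx, y, hy, hxy⟩
      rcases List.append_eq_nil_iff.mp hxy.symm with ⟨rfl, rfl⟩
      exact ⟨hx, hy⟩
  | star r ih =>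
    simp only [nullable, lang, Set.mem_setOf_eq, true_iff]
    exact ⟨[], by simp⟩
  | compl r ih => simp [nullable, lang, ← ih]

lemma star_cons {D P : Type*} (den : P → Set D) (r : ERE P) (a : D) (v : List D)
    (hv : (a :: v) ∈ lang den (.star r)) :
    ∃ x, (a :: x) ∈ lang den r ∧ ∃ y ∈ lang den (.star r), v = x ++ y := by
  obtain ⟨L, hL, hflat⟩ := hv
  induction L generalizing v with
  | nil => simp at hflat
  | cons w L ih =>
    rcases w with _ | ⟨b, w⟩
    · exact ih v (fun x hx => hL x (List.mem_cons_of_mem _ hx)) (by simpa using hflat)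
    · simp only [List.flatten_cons, List.cons_append, List.cons.injEq] at hflat
      obtain ⟨rfl, rfl⟩ := hflat
      exact ⟨w, hL _ (by simp), L.flatten, ⟨L, fun x hx => hL x (by simp [hx]), rfl⟩, rfl⟩

lemma lang_derive {D P : Type*} (E : EBA D P) (R : ERE P) (a : D) (v : List D) :
    v ∈ lang E.den (leafOf E (derive E R) a) ↔ (a :: v) ∈ lang E.den R := by
  induction R generalizing v with
  | pred α =>
    simp only [derive, leafOf]
    by_cases hα : a ∈ E.den α
    · rw [if_pos hα]
      simp only [lang, Set.mem_singleton_iff, Set.mem_setOf_eq]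
      constructor
      · rintro rfl; exact ⟨a, hα, rfl⟩
      · rintro ⟨b, _, hb⟩
        simp only [List.cons.injEq] at hb
        exact hb.2
    · rw [if_neg hα]
      simp only [lang, E.den_bot, Set.mem_setOf_eq]
      constructor
      · rintro ⟨b, hb, _⟩; simp at hb
      · rintro ⟨b, hb, heq⟩
        obtain ⟨rfl, rfl⟩ : a = b ∧ v = [] := by simpa using heq
        exact absurd hb hα
  | eps =>
    simp only [derive, leafOf, lang, E.den_bot, Set.mem_setOf_eq,
      Set.mem_singleton_iff]
    constructor
    · rintro ⟨b, hb, _⟩; simp at hb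
    · intro h; simp at h
  | union r s ihr ihs =>
    simp [derive, leafOf_liftBin, lang, ihr, ihs]
  | inter r s ihr ihs =>
    simp [derive, leafOf_liftBin, lang, ihr, ihs]
  | compl r ih =>
    simp [derive, leafOf_liftUn, lang, ih]
  | star r ih =>
    simp only [derive, leafOf_liftUn]
    constructor
    · rintro ⟨x, hx, y, hy, rfl⟩
      obtain ⟨L, hL, rfl⟩ := hy
      exact ⟨(a :: x) :: L, by
        intro z hz
        rcases List.mem_cons.mp hz with rfl | hz
        · exact (ih _).mp hx
        · exact hL z hz, by simp⟩
    · intro hv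
      obtain ⟨x, hx, y, hy, rfl⟩ := star_cons E.den r a v hv
      exact ⟨x, (ih _).mpr hx, y, hy, rfl⟩
  | concat r s ihr ihs =>
    simp only [derive]
    by_cases hn : nullable r
    · simp only [if_pos hn, leafOf_liftBin, leafOf_liftUn, lang, Set.mem_union,
        Set.mem_setOf_eq]
      constructor
      · rintro (⟨x, hx, y, hy, rfl⟩ | hv)
        · exact ⟨a :: x, (ihr _).mp hx, y, hy, rfl⟩
        · exact ⟨[], (nullable_iff E.den r).mp hn, a :: v, (ihs _).mp hv, rfl⟩
      · rintro ⟨x, hx, y, hy, hxy⟩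
        rcases x with _ | ⟨b, x⟩
        · right; exact (ihs _).mpr (by rw [hxy]; simpa using hy)
        · simp only [List.cons_append, List.cons.injEq] at hxy
          obtain ⟨rfl, rfl⟩ := hxy
          exact Or.inl ⟨x, (ihr _).mpr hx, y, hy, rfl⟩
    · simp only [if_neg hn, leafOf_liftUn, lang, Set.mem_setOf_eq]
      constructor
      · rintro ⟨x, hx, y, hy, rfl⟩
        exact ⟨a :: x, (ihr _).mp hx, y, hy, rfl⟩
      · rintro ⟨x, hx, y, hy, hxy⟩
        rcases x with _ | ⟨b, x⟩
        · exact absurd ((nullable_iff E.den r).mpr hx) hn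
        · simp only [List.cons_append, List.cons.injEq] at hxy
          obtain ⟨rfl, rfl⟩ := hxy
          exact ⟨x, (ihr _).mpr hx, y, hy, rfl⟩

/-- If `ε ∉ L(R)`, then `a·u` is a minimal word of `L(R)` iff `u` is a
minimal word of the language of `leaf(δ(R),a)`. -/
theorem minset_derive {D P : Type*} (E : EBA D P) (R : ERE P)
    (h : [] ∉ lang E.den R) (a : D) (u : List D) :
    (a :: u) ∈ MinSet (lang E.den R) ↔
      u ∈ MinSet (lang E.den (leafOf E (derive E R) a)) := by
  constructor
  · rintro ⟨hmem, hmin⟩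
    refine ⟨(lang_derive E R a u).mpr hmem, ?_⟩
    rintro ⟨x, hprec, hx⟩
    replace hx := (lang_derive E R a x).mp hx
    rcases hprec with ⟨hne, hpre, hneq⟩ | ⟨rfl, hune⟩
    · exact hmin ⟨a :: x, Or.inl ⟨by simp, by simpa using hpre,
        by simpa using hneq⟩, hx⟩
    · exact hmin ⟨[a], Or.inl ⟨by simp, ⟨u, rfl⟩, by simp [hune]⟩, hx⟩
  · rintro ⟨hmem, hmin⟩
    refine ⟨(lang_derive E R a u).mp hmem, ?_⟩
    rintro ⟨x, hprec, hx⟩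
    rcases hprec with ⟨hne, hpre, hneq⟩ | ⟨rfl, _⟩
    · rcases x with _ | ⟨b, y⟩
      · exact hne rfl
      · obtain ⟨hba, hpre'⟩ : b = a ∧ y <+: u := by
          obtain ⟨t, ht⟩ := hpre
          simp only [List.cons_append, List.cons.injEq] at ht
          exact ⟨ht.1, ⟨t, ht.2⟩⟩
        have hy : y ∈ lang E.den (leafOf E (derive E R) a) :=
          (lang_derive E R a y).mpr (hba ▸ hx)
        rcases y with _ | ⟨c, z⟩
        · exact hmin ⟨[], Or.inr ⟨rfl, by rintro rfl; exact hneq (by rw [hba])⟩, hy⟩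
        · exact hmin ⟨c :: z, Or.inl ⟨by simp, hpre',
            by rintro rfl; exact hneq (by rw [hba])⟩, hy⟩
    · exact h hx
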